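/- Let ℚ(v) be the field of rational functions over ℚ in an indeterminate v, with balanced quantum integers [m] = (v^m - v^{-m})/(v - v^{-1}) and quantum binomial coefficients [m choose p] = [m]!/([p]![m-p]!) where [m]! = ∏_{t=1}^{m}[t]. Then for every positive integer n: Σ_{p=0}^{n} (-1)^{p+1} [2n+1 choose p] [2(n-p)+1] = 0. -/

import Mathlib

/-- Balanced quantum integer `[m] = (v^m - v^{-m})/(v - v⁻¹)`. -/
noncomputable def qint {F : Type*} [Field F] (v : F) (m : ℤ) : F :=
  (v ^ m - v ^ (-m)) / (v - v⁻¹)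

/-- Quantum factorial `[m]! = ∏_{t=1}^m [t]`. -/
noncomputable def qfact {F : Type*} [Field F] (v : F) : ℕ → F
  | 0 => 1
  | m + 1 => qfact v m * qint v (m + 1)

/-- Quantum binomial coefficient `[m choose t] = [m]!/([t]![m-t]!)`. -/
noncomputable def qbinom {F : Type*} [Field F] (v : F) (m t : ℕ) : F :=
  qfact v m / (qfact v t * qfact v (m - t))

/-- The field ℚ(v) of rational functions over ℚ. -/
abbrev Kv : Type := RatFunc ℚ

/-- The indeterminate `v` of ℚ(v). -/
noncomputable def vv : Kv := RatFunc.X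

/-!
By the `q`-binomial theorem, `∑ₚ (-1)ᵖ [m choose p] tᵖ = ∏_{j<m} (1 - v^(2j+1-m) t)`. For
`m = 2n + 1` the product vanishes at `t = v⁻²` (factor `j = n + 1`) and, since `n ≥ 1`, at
`t = v²` (factor `j = n - 1`). Expanding `[m - 2p] = (vᵐ v⁻²ᵖ - v⁻ᵐ v²ᵖ) / (v - v⁻¹)` therefore
gives `∑_{p=0}^{m} (-1)ᵖ [m choose p] [m - 2p] = 0`. The summand is invariant under `p ↦ m - p`,
so this full sum is twice the sum over `p ≤ n`, and we may divide by `2`.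
-/

open Finset

section QuantumIntegers

variable {F : Type*} [Field F] {v : F}

lemma qfact_succ (m : ℕ) : qfact v (m + 1) = qfact v m * qint v (m + 1) := rfl

lemma qint_neg (k : ℤ) : qint v (-k) = -qint v k := by
  rw [qint, qint, neg_neg, ← neg_div, neg_sub]

lemma qint_add (hv : v ≠ 0) (a b : ℤ) :
    qint v (a + b) = v ^ a * qint v b + v ^ (-b) * qint v a := by
  simp only [qint, neg_add, zpow_add₀ hv]
  ring

lemma qint_sub_two_mul (hv : v ≠ 0) (m : ℤ) (p : ℕ) :
    qint v (m - 2 * p) =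
      (v ^ m * (v ^ (-2 : ℤ)) ^ p - v ^ (-m) * (v ^ (2 : ℤ)) ^ p) / (v - v⁻¹) := by
  simp only [qint, ← zpow_natCast, ← zpow_mul, ← zpow_add₀ hv]
  ring_nf

lemma qbinom_symm {m p : ℕ} (h : p ≤ m) : qbinom v m (m - p) = qbinom v m p := by
  rw [qbinom, qbinom, Nat.sub_sub_self h, mul_comm]

variable (hv : v ≠ 0) (hfin : ¬IsOfFinOrder v)
include hv hfin

lemma zpow_ne_zpow_neg {k : ℤ} (hk : k ≠ 0) : v ^ k ≠ v ^ (-k) := by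
  intro h
  have h1 : v ^ (k - -k) = 1 := by rw [zpow_sub₀ hv, h, div_self (zpow_ne_zero _ hv)]
  exact hfin (isOfFinOrder_iff_zpow_eq_one.mpr ⟨k - -k, by omega, h1⟩)

lemma qint_ne_zero {k : ℤ} (hk : k ≠ 0) : qint v k ≠ 0 :=
  div_ne_zero (sub_ne_zero.mpr (zpow_ne_zpow_neg hv hfin hk))
    (by simpa using sub_ne_zero.mpr (zpow_ne_zpow_neg hv hfin one_ne_zero))

lemma qfact_ne_zero (m : ℕ) : qfact v m ≠ 0 := by
  induction m with
  | zero => exact one_ne_zero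
  | succ m ih => exact mul_ne_zero ih (qint_ne_zero hv hfin (by omega))

lemma qbinom_zero_right (m : ℕ) : qbinom v m 0 = 1 := by
  rw [qbinom, qfact, one_mul, Nat.sub_zero, div_self (qfact_ne_zero hv hfin m)]

lemma qbinom_self (m : ℕ) : qbinom v m m = 1 := by
  rw [qbinom, Nat.sub_self, qfact, mul_one, div_self (qfact_ne_zero hv hfin m)]

lemma qbinom_succ_succ {m p : ℕ} (h : p < m) :
    qbinom v (m + 1) (p + 1) = v⁻¹ ^ (p + 1) * qbinom v m (p + 1) + v ^ (m - p) * qbinom v m p := by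
  obtain ⟨b, rfl⟩ := Nat.exists_eq_add_of_lt h
  have hsplit : ((p + b + 1 : ℕ) : ℤ) + 1 = ((b : ℤ) + 1) + ((p : ℤ) + 1) := by push_cast; ring
  have hp := qfact_ne_zero hv hfin p
  have hb := qfact_ne_zero hv hfin b
  have hp1 := qint_ne_zero hv hfin (k := (p : ℤ) + 1) (by omega)
  have hb1 := qint_ne_zero hv hfin (k := (b : ℤ) + 1) (by omega)
  rw [qbinom, qbinom, qbinom, qfact_succ, hsplit, qint_add hv,
    show p + b + 1 + 1 - (p + 1) = b + 1 by omega, show p + b + 1 - (p + 1) = b by omega,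
    show p + b + 1 - p = b + 1 by omega, qfact_succ p, qfact_succ b]
  simp only [zpow_neg, zpow_add_one₀ hv, zpow_natCast, inv_pow]
  field_simp
  ring

end QuantumIntegers

section QBinomialTheorem

variable {F : Type*} [Field F] {v : F} (hv : v ≠ 0) (hfin : ¬IsOfFinOrder v)
include hv hfin

lemma sum_qbinom_succ_mul_pow (m : ℕ) (t : F) :
    ∑ p ∈ range (m + 2), (-1) ^ p * qbinom v (m + 1) p * t ^ p =
      (1 - v ^ m * t) * ∑ p ∈ range (m + 1), (-1) ^ p * qbinom v m p * (v⁻¹ * t) ^ p := by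
  set c : ℕ → F := fun p ↦ (-1) ^ p * qbinom v m p * (v⁻¹ * t) ^ p with hc
  have hpow (p : ℕ) : v ^ p * v⁻¹ ^ p = 1 := by rw [← mul_pow, mul_inv_cancel₀ hv, one_pow]
  have hmiddle : ∀ p ∈ range m,
      (-1) ^ (p + 1) * qbinom v (m + 1) (p + 1) * t ^ (p + 1) = c (p + 1) - v ^ m * t * c p := by
    intro p hp
    have hpm := mem_range.mp hp
    have hvm : v ^ m = v ^ (m - p) * v ^ p := by rw [← pow_add, Nat.sub_add_cancel hpm.le]
    simp only [qbinom_succ_succ hv hfin hpm, hc, mul_pow, hvm]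
    linear_combination (-1) ^ p * t ^ (p + 1) * v ^ (m - p) * qbinom v m p * hpow p
  have htop : (-1) ^ (m + 1) * qbinom v (m + 1) (m + 1) * t ^ (m + 1) = -(v ^ m * t * c m) := by
    simp only [hc, qbinom_self hv hfin, mul_pow]
    linear_combination (-1) ^ m * t ^ (m + 1) * hpow m
  rw [sub_mul, one_mul, mul_sum, sum_range_succ' c, sum_range_succ (fun p ↦ v ^ m * t * c p),
    sum_range_succ', sum_range_succ, sum_congr rfl hmiddle, htop, sum_sub_distrib]
  simp only [hc, pow_zero, qbinom_zero_right hv hfin, mul_one]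
  ring

theorem sum_qbinom_mul_pow_eq_prod (m : ℕ) (t : F) :
    ∑ p ∈ range (m + 1), (-1) ^ p * qbinom v m p * t ^ p =
      ∏ j ∈ range m, (1 - v ^ (2 * (j : ℤ) + 1 - m) * t) := by
  induction m generalizing t with
  | zero => simp [qbinom_zero_right hv hfin]
  | succ m ih =>
    rw [sum_qbinom_succ_mul_pow hv hfin, ih, prod_range_succ, mul_comm]
    congr 1
    · refine prod_congr rfl fun j _ ↦ ?_
      rw [← mul_assoc, ← zpow_neg_one, ← zpow_add₀ hv]
      push_cast
      ring_nf
    · rw [← zpow_natCast]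
      push_cast
      ring_nf

end QBinomialTheorem

theorem Finset.sum_range_add_self_eq_two_nsmul {M : Type*} [AddCommMonoid M] (f : ℕ → M) (n : ℕ)
    (hf : ∀ p < n, f (n + n - 1 - p) = f p) :
    ∑ p ∈ range (n + n), f p = 2 • ∑ p ∈ range n, f p := by
  rw [sum_range_add, two_nsmul, ← sum_range_reflect]
  congr 1
  refine sum_congr rfl fun p hp ↦ ?_
  have hpn := mem_range.mp hp
  rw [← hf (n - 1 - p) (by omega)]
  congr 1
  omega

theorem neg_one_pow_two_mul_add_one_sub {R : Type*} [Ring R] {n p : ℕ} (h : p ≤ 2 * n + 1) :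
    (-1 : R) ^ (2 * n + 1 - p) = -(-1) ^ p := by
  rw [neg_one_pow_eq_pow_mod_two, neg_one_pow_eq_pow_mod_two (n := p)]
  rcases Nat.mod_two_eq_zero_or_one p with hp | hp <;>
    rw [hp, show (2 * n + 1 - p) % 2 = 1 - p % 2 by omega, hp] <;> simp

section AlternatingSum

variable {F : Type*} [Field F] {v : F} (hv : v ≠ 0) (hfin : ¬IsOfFinOrder v)
include hv hfin

lemma sum_qbinom_mul_zpow_eq_zero {m j : ℕ} (hj : j < m) :
    ∑ p ∈ range (m + 1), (-1) ^ p * qbinom v m p * (v ^ ((m : ℤ) - 2 * j - 1)) ^ p = 0 := by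
  rw [sum_qbinom_mul_pow_eq_prod hv hfin]
  refine prod_eq_zero (mem_range.mpr hj) ?_
  rw [← zpow_add₀ hv]
  ring_nf
  rw [zpow_zero, sub_self]

lemma sum_qbinom_mul_qint_eq_zero {n : ℕ} (hn : 0 < n) :
    ∑ p ∈ range (2 * n + 2), (-1) ^ p * qbinom v (2 * n + 1) p * qint v (2 * n + 1 - 2 * p) =
      0 := by
  set S : F → F := fun t ↦ ∑ p ∈ range (2 * n + 2), (-1) ^ p * qbinom v (2 * n + 1) p * t ^ p
    with hS
  have hminus : S (v ^ (-2 : ℤ)) = 0 := by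
    have := sum_qbinom_mul_zpow_eq_zero hv hfin (m := 2 * n + 1) (j := n + 1) (by omega)
    rwa [show ((2 * n + 1 : ℕ) : ℤ) - 2 * (n + 1 : ℕ) - 1 = -2 by omega] at this
  have hplus : S (v ^ (2 : ℤ)) = 0 := by
    have := sum_qbinom_mul_zpow_eq_zero hv hfin (m := 2 * n + 1) (j := n - 1) (by omega)
    rwa [show ((2 * n + 1 : ℕ) : ℤ) - 2 * (n - 1 : ℕ) - 1 = 2 by omega] at this
  have hexpand : ∑ p ∈ range (2 * n + 2), (-1) ^ p * qbinom v (2 * n + 1) p *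
      qint v (2 * n + 1 - 2 * p) =
        (v ^ (2 * n + 1 : ℤ) * S (v ^ (-2 : ℤ)) - v ^ (-(2 * n + 1) : ℤ) * S (v ^ (2 : ℤ))) /
          (v - v⁻¹) := by
    simp only [hS, mul_sum, ← sum_sub_distrib, sum_div, qint_sub_two_mul hv]
    exact sum_congr rfl fun p _ ↦ by ring
  rw [hexpand, hminus, hplus, mul_zero, mul_zero, sub_self, zero_div]

theorem sum_neg_one_pow_succ_mul_qbinom_mul_qint_eq_zero (h2 : (2 : F) ≠ 0) {n : ℕ}
    (hn : 0 < n) :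
    ∑ p ∈ range (n + 1), (-1) ^ (p + 1) * qbinom v (2 * n + 1) p * qint v (2 * ((n : ℤ) - p) + 1) =
      0 := by
  set f : ℕ → F := fun p ↦ (-1) ^ p * qbinom v (2 * n + 1) p * qint v (2 * n + 1 - 2 * p) with hf
  have hsymm : ∀ p < n + 1, f (n + 1 + (n + 1) - 1 - p) = f p := by
    intro p hp
    simp only [hf, show n + 1 + (n + 1) - 1 - p = 2 * n + 1 - p by omega]
    rw [qbinom_symm (by omega), neg_one_pow_two_mul_add_one_sub (by omega), Nat.cast_sub (by omega),
      show (2 * n + 1 - 2 * ((2 * n + 1 : ℕ) - p : ℤ)) = -(2 * n + 1 - 2 * p) by push_cast; ring,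
      qint_neg]
    ring
  have hhalf : 2 • ∑ p ∈ range (n + 1), f p = 0 := by
    rw [← sum_range_add_self_eq_two_nsmul f _ hsymm, show n + 1 + (n + 1) = 2 * n + 2 by ring]
    exact sum_qbinom_mul_qint_eq_zero hv hfin hn
  rw [nsmul_eq_mul, Nat.cast_ofNat, mul_eq_zero, or_iff_right h2] at hhalf
  rw [← neg_eq_zero, ← hhalf, ← sum_neg_distrib]
  refine sum_congr rfl fun p _ ↦ ?_
  simp only [hf, show 2 * ((n : ℤ) - p) + 1 = 2 * n + 1 - 2 * p by ring]
  ring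

end AlternatingSum

lemma RatFunc.not_isOfFinOrder_X {K : Type*} [Field K] : ¬IsOfFinOrder (RatFunc.X : RatFunc K) := by
  intro h
  obtain ⟨n, hn, hX⟩ := h.exists_pow_eq_one
  exact RatFunc.transcendental_X (IsAlgebraic.of_pow hn (hX ▸ isAlgebraic_one))

/-- For every positive integer n,
`Σ_{p=0}^{n} (-1)^{p+1} [2n+1 choose p] [2(n-p)+1] = 0` in ℚ(v). -/
theorem stmt8 (n : ℕ) (hn : 0 < n) :
    ∑ p ∈ Finset.range (n + 1),
        (-1 : Kv) ^ (p + 1) * qbinom vv (2 * n + 1) p * qint vv (2 * ((n : ℤ) - p) + 1) = 0 :=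
  sum_neg_one_pow_succ_mul_qbinom_mul_qint_eq_zero RatFunc.X_ne_zero RatFunc.not_isOfFinOrder_X
    two_ne_zero hn
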